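/- arXiv:1010.2243 — 2 statements merged into one kernel-verified Lean document; each statement's English description precedes it below -/
import Mathlib

section
/- Let H be a Hilbert space, E a closed subspace with orthogonal projection P, and T : H → H a linear map such that for every x ∈ H, T x lies in E ⊕ ℝ·(x − P x) (i.e., T x − P(T x) is a scalar multiple of x − P x). Assume E^⊥ has dimension at least 2. Then there exists a unique λ ∈ ℝ such that T = P ∘ T + λ·I − λ·P. -/
/-!
Write `Q x = T x - P (T x)` for the component of `T x` normal to `E`. On `E` the hypothesis says
`Q = 0`; on `Eᗮ` it says that every vector is an eigenvector of the compression of `T` to `Eᗮ`, and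
an endomorphism with this property is a homothety `λ • 1`. Splitting `x = P x + (x - P x)` gives
`Q x = λ (x - P x)`, and `λ` is unique because `Eᗮ ≠ 0`.
-/

theorem LinearMap.exists_eq_smul_one_of_forall_exists_eq_smul {K V : Type*} [Field K]
    [AddCommGroup V] [Module K V] {f : V →ₗ[K] V} (h : ∀ v, ∃ μ : K, f v = μ • v) :
    ∃ a : K, f = a • 1 := by
  refine f.exists_eq_smul_id_of_forall_notLinearIndependent fun v hv => ?_
  obtain ⟨μ, hμ⟩ := h v
  have := LinearIndependent.pair_iff.mp hv μ (-1) (by rw [hμ, neg_one_smul, add_neg_cancel])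
  exact one_ne_zero (neg_eq_zero.mp this.2)

namespace Submodule

variable {H : Type*} [NormedAddCommGroup H] [InnerProductSpace ℝ H]
  (E : Submodule ℝ H) [E.HasOrthogonalProjection] (T : H →ₗ[ℝ] H)

noncomputable def orthogonalCompression : Eᗮ →ₗ[ℝ] Eᗮ :=
  (Eᗮ.orthogonalProjectionOnto : H →L[ℝ] Eᗮ).toLinearMap ∘ₗ T ∘ₗ Eᗮ.subtype

variable {E T}

theorem coe_orthogonalCompression_apply (x : Eᗮ) :
    (E.orthogonalCompression T x : H) = T x - E.starProjection (T x) := by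
  simp [orthogonalCompression]

theorem orthogonalCompression_eq_smul_one_iff (hTE : ∀ x ∈ E, T x ∈ E) (lam : ℝ) :
    E.orthogonalCompression T = lam • 1 ↔
      ∀ x, T x = E.starProjection (T x) + lam • x - lam • E.starProjection x := by
  constructor
  · intro h x
    have hE : T (E.starProjection x) - E.starProjection (T (E.starProjection x)) = 0 := by
      rw [starProjection_eq_self_iff.mpr (hTE _ (E.starProjection_apply_mem x)), sub_self]
    have hEperp : T (x - E.starProjection x) - E.starProjection (T (x - E.starProjection x)) =
        lam • (x - E.starProjection x) := by
      simpa [coe_orthogonalCompression_apply] using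
        congr(($h ⟨x - E.starProjection x, sub_starProjection_mem_orthogonal x⟩ : H))
    rw [map_sub, map_sub] at hEperp
    linear_combination (norm := module) hE + hEperp
  · intro h
    ext x
    have hx : E.starProjection x = 0 := (E.starProjection_apply_eq_zero_iff).mpr x.2
    have hTx := h x
    rw [hx, smul_zero, sub_zero] at hTx
    rw [coe_orthogonalCompression_apply, LinearMap.smul_apply, Module.End.one_apply,
      SetLike.val_smul]
    linear_combination (norm := module) hTx

variable (hT : ∀ x, ∃ μ : ℝ, T x = E.starProjection (T x) + μ • (x - E.starProjection x))
include hT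

theorem apply_mem_of_forall_exists_eq_starProjection_add_smul {x : H} (hx : x ∈ E) : T x ∈ E := by
  obtain ⟨μ, hμ⟩ := hT x
  rw [starProjection_eq_self_iff.mpr hx, sub_self, smul_zero, add_zero] at hμ
  exact starProjection_eq_self_iff.mp hμ.symm

theorem exists_orthogonalCompression_eq_smul_one : ∃ a : ℝ, E.orthogonalCompression T = a • 1 := by
  refine LinearMap.exists_eq_smul_one_of_forall_exists_eq_smul fun x => ?_
  obtain ⟨μ, hμ⟩ := hT x
  have hx : E.starProjection x = 0 := (E.starProjection_apply_eq_zero_iff).mpr x.2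
  refine ⟨μ, Subtype.ext ?_⟩
  rw [hx, sub_zero] at hμ
  rw [coe_orthogonalCompression_apply, SetLike.val_smul]
  linear_combination (norm := module) hμ

end Submodule

theorem stmt_3_general {H : Type*} [NormedAddCommGroup H] [InnerProductSpace ℝ H]
    (E : Submodule ℝ H) [E.HasOrthogonalProjection] (T : H →ₗ[ℝ] H)
    (hT : ∀ x : H, ∃ mu : ℝ,
      T x = (E.orthogonalProjectionOnto (T x) : H) + mu • (x - (E.orthogonalProjectionOnto x : H)))
    (hdim : 2 ≤ Module.rank ℝ Eᗮ) :
    ∃! lam : ℝ, ∀ x : H, T x = (E.orthogonalProjectionOnto (T x) : H) + lam • x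
        - lam • (E.orthogonalProjectionOnto x : H) := by
  have : Nontrivial Eᗮ := rank_pos_iff_nontrivial.mp (zero_lt_two.trans_le hdim)
  have hiff := E.orthogonalCompression_eq_smul_one_iff
    fun _ => E.apply_mem_of_forall_exists_eq_starProjection_add_smul hT
  obtain ⟨lam, hlam⟩ := E.exists_orthogonalCompression_eq_smul_one hT
  refine ⟨lam, (hiff lam).mp hlam, fun c hc => ?_⟩
  exact smul_left_injective ℝ (one_ne_zero (α := Module.End ℝ Eᗮ))
    (((hiff c).mpr hc).symm.trans hlam)

/-- If `T` is linear, `P` is the orthogonal projection onto a closed subspace `E`,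
`T x − P (T x)` is always a scalar multiple of `x − P x`, and `dim Eᗮ ≥ 2`, then there
is a unique `λ ∈ ℝ` with `T = P ∘ T + λ·I − λ·P`. -/
theorem stmt_3 {H : Type*} [NormedAddCommGroup H] [InnerProductSpace ℝ H] [CompleteSpace H]
    (E : Submodule ℝ H) [E.HasOrthogonalProjection] (T : H →ₗ[ℝ] H)
    (hT : ∀ x : H, ∃ mu : ℝ,
      T x = (E.orthogonalProjectionOnto (T x) : H) + mu • (x - (E.orthogonalProjectionOnto x : H)))
    (hdim : 2 ≤ Module.rank ℝ Eᗮ) :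
    ∃! lam : ℝ, ∀ x : H, T x = (E.orthogonalProjectionOnto (T x) : H) + lam • x
        - lam • (E.orthogonalProjectionOnto x : H) :=
  stmt_3_general E T hT hdim
end

section
/- Let H be a separable infinite-dimensional complex Hilbert space and T = λ·I + K with λ ∈ ℂ and K compact. Then there exists a closed subspace E of H with E ≠ {0} and E ≠ H such that T(E) ⊆ E. -/
/-!
If `K` has an eigenvalue, the line through an eigenvector is invariant. Otherwise, for `y ≠ 0` the
closure of `{Q y | Q commutes with K}` is `K`-invariant, and it is proper unless all these orbits
are dense. In that case Hilden's argument applies: take a small ball `B` around `x₀` such that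
neither `B` nor `closure (K '' B)` contains `0`, and cover the compact set `closure (K '' B)` by
finitely many sets `Q ⁻¹' ball x₀ ρ`. Iterating gives commuting `P n` with `‖P n‖ ≤ M ^ n` and
`P n (K ^ n x₀) ∈ B`, so `‖K ^ n‖` decays at most geometrically and `K` has positive spectral
radius. By the Fredholm alternative `K` then has a nonzero eigenvalue after all.
-/

open Metric Set Filter Topology Module End

theorem spectralRadius_pos_of_mul_pow_le_norm_pow {A : Type*} [NormedRing A] [NormedAlgebra ℂ A]
    [CompleteSpace A] {a : A} {c r : ℝ} (hc : 0 < c) (hr : 0 < r)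
    (h : ∀ n : ℕ, c * r ^ n ≤ ‖a ^ n‖) : 0 < spectralRadius ℂ a := by
  set b := min c 1 * r
  have hb : 0 < b := by positivity
  have hle : ∀ᶠ n : ℕ in atTop, ENNReal.ofReal b ≤ ENNReal.ofReal (‖a ^ n‖ ^ (1 / n : ℝ)) := by
    filter_upwards [eventually_ne_atTop 0] with n hn
    refine ENNReal.ofReal_le_ofReal ?_
    calc b = (b ^ n) ^ (1 / n : ℝ) := by rw [one_div, Real.pow_rpow_inv_natCast hb.le hn]
      _ ≤ ‖a ^ n‖ ^ (1 / n : ℝ) := by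
        refine Real.rpow_le_rpow (by positivity) ((h n).trans' ?_) (by positivity)
        rw [mul_pow]
        gcongr
        exact (pow_le_of_le_one (by positivity) (min_le_right _ _) hn).trans (min_le_left _ _)
  exact (ENNReal.ofReal_pos.mpr hb).trans_le
    (ge_of_tendsto (spectrum.pow_norm_pow_one_div_tendsto_nhds_spectralRadius a) hle)

theorem IsCompactOperator.exists_hasEigenvalue_of_spectralRadius_pos {E : Type*}
    [NormedAddCommGroup E] [NormedSpace ℂ E] [CompleteSpace E] [Nontrivial E]
    {K : E →L[ℂ] E} (hK : IsCompactOperator K) (h : 0 < spectralRadius ℂ K) :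
    ∃ μ, HasEigenvalue (K : End ℂ E) μ := by
  obtain ⟨μ, hμσ, hμr⟩ := spectrum.exists_nnnorm_eq_spectralRadius K
  have hμ : μ ≠ 0 := by
    rintro rfl
    simp [← hμr] at h
  exact ⟨μ, (hK.hasEigenvalue_iff_mem_spectrum hμ).mpr hμσ⟩

section Cyclic

variable {𝕜 E : Type*} [NontriviallyNormedField 𝕜] [SeminormedAddCommGroup E] [NormedSpace 𝕜 E]

noncomputable def cyclicSubmodule (A : Subalgebra 𝕜 (E →L[𝕜] E)) (y : E) : Submodule 𝕜 E :=
  A.toSubmodule.map (ContinuousLinearMap.apply 𝕜 E y : (E →L[𝕜] E) →ₗ[𝕜] E)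

variable {A : Subalgebra 𝕜 (E →L[𝕜] E)} {x y : E}

theorem mem_cyclicSubmodule : x ∈ cyclicSubmodule A y ↔ ∃ Q ∈ A, Q y = x := Iff.rfl

theorem self_mem_cyclicSubmodule : y ∈ cyclicSubmodule A y := ⟨1, one_mem A, rfl⟩

theorem apply_mem_topologicalClosure_cyclicSubmodule {T : E →L[𝕜] E} (hT : T ∈ A)
    (hx : x ∈ (cyclicSubmodule A y).topologicalClosure) :
    T x ∈ (cyclicSubmodule A y).topologicalClosure := by
  refine map_mem_closure T.continuous hx ?_
  rintro _ ⟨Q, hQ, rfl⟩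
  exact ⟨T * Q, A.mul_mem hT hQ, rfl⟩

end Cyclic

theorem IsCompact.exists_norm_le_of_forall_exists_apply_mem {𝕜 E F : Type*}
    [NontriviallyNormedField 𝕜] [SeminormedAddCommGroup E] [SeminormedAddCommGroup F]
    [NormedSpace 𝕜 E] [NormedSpace 𝕜 F] {C : Set E} {U : Set F} {S : Set (E →L[𝕜] F)}
    (hC : IsCompact C) (hU : IsOpen U) (h : ∀ z ∈ C, ∃ Q ∈ S, Q z ∈ U) :
    ∃ M > 0, ∀ z ∈ C, ∃ Q ∈ S, ‖Q‖ ≤ M ∧ Q z ∈ U := by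
  obtain ⟨S', hS'S, hS'fin, hcover⟩ := hC.elim_finite_subcover_image (b := S)
    (c := fun Q ↦ Q ⁻¹' U) (fun Q _ ↦ hU.preimage Q.continuous) (by simpa [subset_def] using h)
  obtain ⟨M, hM⟩ := (hS'fin.image (‖·‖)).bddAbove
  refine ⟨max M 1, by positivity, fun z hz ↦ ?_⟩
  obtain ⟨Q, hQ, hQz⟩ := mem_iUnion₂.mp (hcover hz)
  exact ⟨Q, hS'S hQ, le_max_of_le_left (hM (mem_image_of_mem _ hQ)), hQz⟩

theorem exists_mem_centralizer_norm_le_pow_apply_pow_mem {𝕜 E : Type*}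
    [NontriviallyNormedField 𝕜] [SeminormedAddCommGroup E] [NormedSpace 𝕜 E]
    {K : E →L[𝕜] E} {B : Set E} {M : ℝ} (hM : 0 ≤ M)
    (hstep : ∀ y ∈ B, ∃ Q ∈ Subalgebra.centralizer 𝕜 {K}, ‖Q‖ ≤ M ∧ Q (K y) ∈ B)
    {x : E} (hx : x ∈ B) (n : ℕ) :
    ∃ P ∈ Subalgebra.centralizer 𝕜 {K}, ‖P‖ ≤ M ^ n ∧ P ((K ^ n) x) ∈ B := by
  induction n with
  | zero =>
    exact ⟨1, one_mem _, ContinuousLinearMap.norm_id_le.trans_eq (pow_zero M).symm,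
      by simpa using hx⟩
  | succ n ih =>
    obtain ⟨P, hP, hPn, hPx⟩ := ih
    obtain ⟨Q, hQ, hQn, hQx⟩ := hstep _ hPx
    have hKP : K * P = P * K := (Subalgebra.mem_centralizer_iff 𝕜).mp hP K rfl
    refine ⟨Q * P, mul_mem hQ hP, ?_, ?_⟩
    · calc ‖Q * P‖ ≤ ‖Q‖ * ‖P‖ := norm_mul_le _ _
        _ ≤ M * M ^ n := mul_le_mul hQn hPn (norm_nonneg _) hM
        _ = M ^ (n + 1) := (pow_succ' M n).symm
    · rwa [pow_succ', mul_apply_eq_comp, mul_apply_eq_comp,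
        ← mul_apply_eq_comp P K, ← hKP]

theorem ContinuousLinearMap.exists_pos_zero_notMem_closure_image_closedBall {𝕜 E : Type*}
    [NontriviallyNormedField 𝕜] [NormedAddCommGroup E] [NormedSpace 𝕜 E]
    (K : E →L[𝕜] E) {x₀ : E} (hKx₀ : K x₀ ≠ 0) :
    ∃ ρ > 0, ρ < ‖x₀‖ ∧ (0 : E) ∉ closure (K '' closedBall x₀ ρ) := by
  have hx₀ : 0 < ‖x₀‖ := norm_pos_iff.mpr fun h ↦ hKx₀ (by rw [h, map_zero])
  obtain ⟨r, hr, hKr⟩ := exists_pos_mul_lt (norm_pos_iff.mpr hKx₀) ‖K‖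
  refine ⟨min r (‖x₀‖ / 2), by positivity, (min_le_right _ _).trans_lt (half_lt_self hx₀), ?_⟩
  intro h
  have := mem_closedBall_iff_norm'.mp <| closure_minimal
    (K.lipschitz.mapsTo_closedBall x₀ _).image_subset isClosed_closedBall h
  rw [sub_zero, coe_nnnorm] at this
  exact hKr.not_ge (this.trans (by gcongr; exact min_le_left _ _))

theorem IsCompactOperator.spectralRadius_pos_of_forall_dense_cyclicSubmodule {E : Type*}
    [NormedAddCommGroup E] [NormedSpace ℂ E] [CompleteSpace E] {K : E →L[ℂ] E}
    (hK : IsCompactOperator K) (hK0 : K ≠ 0)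
    (hdense : ∀ y ≠ 0, Dense (cyclicSubmodule (Subalgebra.centralizer ℂ {K}) y : Set E)) :
    0 < spectralRadius ℂ K := by
  obtain ⟨x₀, hKx₀⟩ : ∃ x₀, K x₀ ≠ 0 := by
    by_contra! h
    exact hK0 (ContinuousLinearMap.ext h)
  obtain ⟨ρ, hρ, hρx₀, h0⟩ := K.exists_pos_zero_notMem_closure_image_closedBall hKx₀
  have hx₀ : 0 < ‖x₀‖ := hρ.trans hρx₀
  set B := closedBall x₀ ρ
  have hB : ∀ x ∈ B, ‖x₀‖ - ρ ≤ ‖x‖ := fun x hx ↦ by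
    linarith [norm_sub_norm_le x₀ x, mem_closedBall_iff_norm'.mp hx]
  obtain ⟨M, hM, hMQ⟩ := (hK.isCompact_closure_image_of_bounded isBounded_closedBall
    ).exists_norm_le_of_forall_exists_apply_mem
    (S := (Subalgebra.centralizer ℂ {K} : Set (E →L[ℂ] E))) isOpen_ball fun z hz ↦ by
      obtain ⟨_, hw, hwx₀⟩ := (hdense z (ne_of_mem_of_not_mem hz h0)).exists_mem_open
        isOpen_ball ⟨x₀, mem_ball_self hρ⟩
      obtain ⟨Q, hQ, rfl⟩ := mem_cyclicSubmodule.mp hw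
      exact ⟨Q, hQ, hwx₀⟩
  have hstep : ∀ y ∈ B, ∃ Q ∈ Subalgebra.centralizer ℂ {K}, ‖Q‖ ≤ M ∧ Q (K y) ∈ B := by
    intro y hy
    obtain ⟨Q, hQ, hQM, hQy⟩ := hMQ (K y) (subset_closure (mem_image_of_mem K hy))
    exact ⟨Q, hQ, hQM, ball_subset_closedBall hQy⟩
  refine spectralRadius_pos_of_mul_pow_le_norm_pow (c := (‖x₀‖ - ρ) / ‖x₀‖) (r := M⁻¹)
    (div_pos (sub_pos.mpr hρx₀) hx₀) (inv_pos.mpr hM) fun n ↦ ?_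
  obtain ⟨P, -, hPn, hPB⟩ :=
    exists_mem_centralizer_norm_le_pow_apply_pow_mem hM.le hstep (mem_closedBall_self hρ.le) n
  have : ‖x₀‖ - ρ ≤ M ^ n * (‖K ^ n‖ * ‖x₀‖) :=
    calc ‖x₀‖ - ρ ≤ ‖P ((K ^ n) x₀)‖ := hB _ hPB
      _ ≤ ‖P‖ * ‖(K ^ n) x₀‖ := P.le_opNorm _
      _ ≤ M ^ n * (‖K ^ n‖ * ‖x₀‖) := by gcongr; exact (K ^ n).le_opNorm _
  rw [inv_pow, div_mul_eq_mul_div, div_le_iff₀ hx₀, mul_inv_le_iff₀ (by positivity)]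
  linarith

theorem Module.End.HasEigenvalue.exists_closed_invariant_submodule {𝕜 E : Type*}
    [NontriviallyNormedField 𝕜] [CompleteSpace 𝕜] [NormedAddCommGroup E] [NormedSpace 𝕜 E]
    (hinf : ¬ FiniteDimensional 𝕜 E) {K : E →L[𝕜] E} {μ : 𝕜}
    (hμ : HasEigenvalue (K : End 𝕜 E) μ) :
    ∃ S : Submodule 𝕜 E, IsClosed (S : Set E) ∧ S ≠ ⊥ ∧ S ≠ ⊤ ∧ ∀ x ∈ S, K x ∈ S := by
  obtain ⟨v, hv⟩ := hμ.exists_hasEigenvector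
  refine ⟨𝕜 ∙ v, Submodule.closed_of_finiteDimensional _, ?_, ?_, ?_⟩
  · exact Submodule.span_singleton_eq_bot.not.mpr hv.2
  · exact fun h ↦ hinf (Module.finite_def.mpr (h ▸ Submodule.fg_span_singleton v))
  · intro x hx
    obtain ⟨a, rfl⟩ := Submodule.mem_span_singleton.mp hx
    rw [map_smul, ← ContinuousLinearMap.coe_coe, hv.apply_eq_smul]
    exact Submodule.smul_mem _ _ (Submodule.smul_mem _ _ (Submodule.mem_span_singleton_self v))

theorem IsCompactOperator.exists_closed_invariant_submodule {E : Type*}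
    [NormedAddCommGroup E] [NormedSpace ℂ E] [CompleteSpace E]
    (hinf : ¬ FiniteDimensional ℂ E) {K : E →L[ℂ] E} (hK : IsCompactOperator K) :
    ∃ S : Submodule ℂ E, IsClosed (S : Set E) ∧ S ≠ ⊥ ∧ S ≠ ⊤ ∧ ∀ x ∈ S, K x ∈ S := by
  have : Nontrivial E := by
    by_contra h
    have := not_nontrivial_iff_subsingleton.mp h
    exact hinf inferInstance
  by_cases heig : ∃ μ, HasEigenvalue (K : End ℂ E) μ
  · obtain ⟨μ, hμ⟩ := heig
    exact hμ.exists_closed_invariant_submodule hinf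
  set A := Subalgebra.centralizer ℂ {K}
  by_cases hdense : ∀ y ≠ 0, Dense (cyclicSubmodule A y : Set E)
  · have hK0 : K ≠ 0 := by
      rintro rfl
      obtain ⟨v, hv⟩ := exists_ne (0 : E)
      exact heig ⟨0, hasEigenvalue_of_hasEigenvector ⟨by simp, hv⟩⟩
    exact absurd (hK.exists_hasEigenvalue_of_spectralRadius_pos
      (hK.spectralRadius_pos_of_forall_dense_cyclicSubmodule hK0 hdense)) heig
  push Not at hdense
  obtain ⟨y, hy, hnd⟩ := hdense
  refine ⟨(cyclicSubmodule A y).topologicalClosure, Submodule.isClosed_topologicalClosure _,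
    ?_, ?_, fun x hx ↦ apply_mem_topologicalClosure_cyclicSubmodule ?_ hx⟩
  · exact (Submodule.ne_bot_iff _).mpr
      ⟨y, Submodule.le_topologicalClosure _ self_mem_cyclicSubmodule, hy⟩
  · exact mt Submodule.dense_iff_topologicalClosure_eq_top.mpr hnd
  · exact (Subalgebra.mem_centralizer_iff ℂ).mpr (by simp)

theorem stmt_17_general {H : Type*} [NormedAddCommGroup H] [InnerProductSpace ℂ H] [CompleteSpace H]
    (hinf : ¬ FiniteDimensional ℂ H)
    (lam : ℂ) (K : H →L[ℂ] H) (hK : IsCompactOperator K)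
    (T : H →L[ℂ] H) (hT : T = lam • ContinuousLinearMap.id ℂ H + K) :
    ∃ E : Submodule ℂ H, IsClosed (E : Set H) ∧ E ≠ ⊥ ∧ E ≠ ⊤ ∧ ∀ x ∈ E, T x ∈ E := by
  obtain ⟨S, hS, hbot, htop, hKS⟩ := hK.exists_closed_invariant_submodule hinf
  refine ⟨S, hS, hbot, htop, fun x hx ↦ ?_⟩
  subst hT
  exact S.add_mem (S.smul_mem lam hx) (hKS x hx)

/-- Every scalar-plus-compact operator on a separable infinite-dimensional complex
Hilbert space has a nontrivial closed invariant subspace. -/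
theorem stmt_17 {H : Type*} [NormedAddCommGroup H] [InnerProductSpace ℂ H] [CompleteSpace H]
    [TopologicalSpace.SeparableSpace H] (hinf : ¬ FiniteDimensional ℂ H)
    (lam : ℂ) (K : H →L[ℂ] H) (hK : IsCompactOperator K)
    (T : H →L[ℂ] H) (hT : T = lam • ContinuousLinearMap.id ℂ H + K) :
    ∃ E : Submodule ℂ H, IsClosed (E : Set H) ∧ E ≠ ⊥ ∧ E ≠ ⊤ ∧ ∀ x ∈ E, T x ∈ E :=
  stmt_17_general hinf lam K hK T hT
end
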